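/- Suppose the s×s matrices C₁ and C₂ have operator norm 1 and are invertible. Then B_{E^r}[2] is not contained in B_{E^c}[2] and B_{E^c}[2] is not contained in B_{E^r}[2]: there exists X ∈ M₂(ℂ)² with ‖Λ_{E^r}(X)‖ < 1 but ‖Λ_{E^c}(X)‖ ≥ 1, and there exists X' ∈ M₂(ℂ)² with ‖Λ_{E^c}(X')‖ < 1 but ‖Λ_{E^r}(X')‖ ≥ 1. -/

import Mathlib

open scoped ComplexOrder Kronecker Matrix Matrix.Norms.L2Operator

noncomputable section

/-- Square complex matrices of size `n`. -/
abbrev Mat (n : ℕ) : Type := Matrix (Fin n) (Fin n) ℂ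

/-- Assemble a `k × k` array of matrices into a single block matrix. -/
def blockMat {k : ℕ} {α β : Type*} (M : Fin k → Fin k → Matrix α β ℂ) :
    Matrix (Fin k × α) (Fin k × β) ℂ :=
  Matrix.of fun p q => M p.1 q.1 p.2 q.2

/-!
Let `X₀ = (E₁₂, E₂₂)` be a pair of matrix units. Up to zero columns and a reordering of rows,
`Λ_{E^r}(X₀)` is the block diagonal matrix `diag(C₁, C₂)`, of norm `max ‖C₁‖ ‖C₂‖ = 1`, while
`Λ_{E^c}(X₀)` contains the stacked matrix `(C₁; C₂)` as a submatrix. On a unit vector `w` with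
`‖C₁ w‖ = ‖C₁‖ = 1` the stacked matrix has `‖(C₁ w; C₂ w)‖² = 1 + ‖C₂ w‖² > 1`, since `C₂` is
injective. Rescaling `X₀` by `‖Λ_{E^c}(X₀)‖⁻¹` gives a point of `B_{E^r}[2] \ B_{E^c}[2]`; taking
conjugate transposes exchanges the roles of `E^r` and `E^c` and gives the other point.
-/

open Matrix WithLp

/-- The paper's `Λ_G(X)` for `G = (G₁, G₂)`. -/
def pencil {p q a b : Type*} (G₁ G₂ : Matrix p q ℂ) (X : Matrix a b ℂ × Matrix a b ℂ) :
    Matrix (p × a) (q × b) ℂ :=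
  G₁ ⊗ₖ X.1 + G₂ ⊗ₖ X.2

lemma pencil_smul {p q a b : Type*} (G₁ G₂ : Matrix p q ℂ) (c : ℂ)
    (X : Matrix a b ℂ × Matrix a b ℂ) : pencil G₁ G₂ (c • X) = c • pencil G₁ G₂ X := by
  simp [pencil, kronecker_smul, smul_add]

lemma conjTranspose_pencil {p q a b : Type*} (G₁ G₂ : Matrix p q ℂ)
    (X : Matrix a b ℂ × Matrix a b ℂ) : (pencil G₁ G₂ X)ᴴ = pencil G₁ᴴ G₂ᴴ (X.1ᴴ, X.2ᴴ) := by
  simp [pencil, conjTranspose_kronecker]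

lemma exists_norm_pencil_lt_one_le_norm_pencil {p q p' q' a b : Type*} [Fintype p] [Fintype q]
    [DecidableEq q] [Fintype p'] [Fintype q'] [DecidableEq q'] [Fintype a] [Fintype b]
    [DecidableEq b] {G₁ G₂ : Matrix p q ℂ} {H₁ H₂ : Matrix p' q' ℂ}
    {X : Matrix a b ℂ × Matrix a b ℂ} (h : ‖pencil G₁ G₂ X‖ < ‖pencil H₁ H₂ X‖) :
    ∃ Y : Matrix a b ℂ × Matrix a b ℂ, ‖pencil G₁ G₂ Y‖ < 1 ∧ 1 ≤ ‖pencil H₁ H₂ Y‖ := by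
  set r := ‖pencil H₁ H₂ X‖
  have hr : 0 < r := (norm_nonneg _).trans_lt h
  refine ⟨((r⁻¹ : ℝ) : ℂ) • X, ?_, ?_⟩ <;>
    rw [pencil_smul, norm_smul, Complex.norm_real, Real.norm_of_nonneg (inv_nonneg.2 hr.le)]
  · rwa [inv_mul_lt_iff₀ hr, mul_one]
  · rw [inv_mul_cancel₀ hr.ne']

section EuclideanNorm

variable {m m' n : Type*} [Fintype m] [Fintype m'] [Fintype n] [DecidableEq n]

lemma norm_sq_toLp_sumElim (a : m → ℂ) (b : m' → ℂ) :
    ‖toLp 2 (Sum.elim a b)‖ ^ 2 = ‖toLp 2 a‖ ^ 2 + ‖toLp 2 b‖ ^ 2 := by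
  simp [EuclideanSpace.norm_sq_eq, Fintype.sum_sum_type]

lemma norm_toLp_mulVec_le (A : Matrix m n ℂ) (v : n → ℂ) :
    ‖toLp 2 (A *ᵥ v)‖ ≤ ‖A‖ * ‖toLp 2 v‖ :=
  A.l2_opNorm_mulVec (toLp 2 v)

lemma l2_opNorm_le_of_forall {A : Matrix m n ℂ} {c : ℝ} (hc : 0 ≤ c)
    (h : ∀ v : n → ℂ, ‖toLp 2 (A *ᵥ v)‖ ≤ c * ‖toLp 2 v‖) : ‖A‖ ≤ c :=
  ContinuousLinearMap.opNorm_le_bound _ hc fun x => h (ofLp x)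

lemma exists_norm_toLp_eq_one_and_norm_mulVec_eq_l2_opNorm [Nonempty n] (A : Matrix m n ℂ) :
    ∃ v : n → ℂ, ‖toLp 2 v‖ = 1 ∧ ‖toLp 2 (A *ᵥ v)‖ = ‖A‖ := by
  set T := (toEuclideanLin (𝕜 := ℂ) (m := m) (n := n)).trans LinearMap.toContinuousLinearMap A
  obtain ⟨x, hx, hmax⟩ := (isCompact_sphere (0 : EuclideanSpace ℂ n) 1).exists_isMaxOn
    (NormedSpace.sphere_nonempty.2 zero_le_one) (continuous_norm.comp T.continuous).continuousOn
  rw [mem_sphere_zero_iff_norm] at hx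
  refine ⟨ofLp x, hx, le_antisymm ?_ ?_⟩
  · exact (by simpa [hx] using T.le_opNorm x : ‖T x‖ ≤ ‖T‖)
  · exact T.opNorm_le_of_unit_norm (norm_nonneg _) fun y hy => hmax (mem_sphere_zero_iff_norm.2 hy)

lemma l2_opNorm_lt_l2_opNorm_fromRows [Nonempty n] (A : Matrix m n ℂ) {B : Matrix m' n ℂ}
    (hB : Function.Injective B.mulVec) : ‖A‖ < ‖fromRows A B‖ := by
  obtain ⟨v, hv, hAv⟩ := exists_norm_toLp_eq_one_and_norm_mulVec_eq_l2_opNorm A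
  have hBv : 0 < ‖toLp 2 (B *ᵥ v)‖ := by
    refine norm_pos_iff.2 fun h => ?_
    have hv0 : v = 0 := hB (by simpa using h)
    simp [hv0] at hv
  have hle : ‖toLp 2 (fromRows A B *ᵥ v)‖ ≤ ‖fromRows A B‖ := by
    simpa [hv] using norm_toLp_mulVec_le (fromRows A B) v
  have hsq := norm_sq_toLp_sumElim (A *ᵥ v) (B *ᵥ v)
  rw [← fromRows_mulVec, hAv] at hsq
  have := pow_le_pow_left₀ (norm_nonneg _) hle 2
  nlinarith [norm_nonneg (fromRows A B), norm_nonneg A]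

end EuclideanNorm

def matrixUnits : Mat 2 × Mat 2 := (single 0 1 1, single 1 1 1)

section MatrixUnits

variable {m n : Type*} [Fintype n] (A B : Matrix m n ℂ)

lemma pencil_fromCols_matrixUnits_mulVec (v : (n ⊕ n) × Fin 2 → ℂ) :
    pencil (fromCols A 0) (fromCols 0 B) matrixUnits *ᵥ v =
      fun p => ![A *ᵥ fun j => v (.inl j, 1), B *ᵥ fun j => v (.inr j, 1)] p.2 p.1 := by
  ext ⟨i, a⟩
  fin_cases a <;>
    simp [pencil, matrixUnits, mulVec, dotProduct, Fintype.sum_prod_type, Fintype.sum_sum_type,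
      single_apply]

lemma pencil_fromRows_matrixUnits_mulVec (w : n → ℂ) :
    pencil (fromRows A 0) (fromRows 0 B) matrixUnits *ᵥ (fun p => ![0, w p.1] p.2) =
      fun p => Sum.elim (fun i => ![(A *ᵥ w) i, 0]) (fun i => ![0, (B *ᵥ w) i]) p.1 p.2 := by
  ext ⟨i | i, a⟩ <;> fin_cases a <;>
    simp [pencil, matrixUnits, mulVec, dotProduct, Fintype.sum_prod_type, single_apply]

variable [Fintype m] [DecidableEq n]

lemma norm_pencil_fromCols_matrixUnits_le :
    ‖pencil (fromCols A 0) (fromCols 0 B) matrixUnits‖ ≤ max ‖A‖ ‖B‖ := by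
  set M := max ‖A‖ ‖B‖
  refine l2_opNorm_le_of_forall (le_max_of_le_left (norm_nonneg A)) fun v => ?_
  set u : n ⊕ n → ℂ := fun x => v (x, 1)
  have hu : ‖toLp 2 u‖ ^ 2 ≤ ‖toLp 2 v‖ ^ 2 := by
    simp only [EuclideanSpace.norm_sq_eq, Fintype.sum_prod_type (f := fun p => ‖v p‖ ^ 2),
      Fin.sum_univ_two]
    exact Finset.sum_le_sum fun x _ => le_add_of_nonneg_left (by positivity)
  have hΛ : ‖toLp 2 (pencil (fromCols A 0) (fromCols 0 B) matrixUnits *ᵥ v)‖ ^ 2 =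
      ‖toLp 2 (A *ᵥ (u ∘ .inl))‖ ^ 2 + ‖toLp 2 (B *ᵥ (u ∘ .inr))‖ ^ 2 := by
    rw [pencil_fromCols_matrixUnits_mulVec]
    simp [EuclideanSpace.norm_sq_eq, Fintype.sum_prod_type, Finset.sum_add_distrib, u,
      Function.comp_def]
  have hsplit := norm_sq_toLp_sumElim (u ∘ .inl) (u ∘ .inr)
  rw [Sum.elim_comp_inl_inr] at hsplit
  refine (sq_le_sq₀ (norm_nonneg _) (by positivity)).1 ?_
  calc _ = ‖toLp 2 (A *ᵥ (u ∘ .inl))‖ ^ 2 + ‖toLp 2 (B *ᵥ (u ∘ .inr))‖ ^ 2 := hΛ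
    _ ≤ (M * ‖toLp 2 (u ∘ .inl)‖) ^ 2 + (M * ‖toLp 2 (u ∘ .inr)‖) ^ 2 := by
      gcongr
      · exact (norm_toLp_mulVec_le A _).trans (by gcongr; exact le_max_left _ _)
      · exact (norm_toLp_mulVec_le B _).trans (by gcongr; exact le_max_right _ _)
    _ = M ^ 2 * ‖toLp 2 u‖ ^ 2 := by rw [hsplit]; ring
    _ ≤ (M * ‖toLp 2 v‖) ^ 2 := by rw [mul_pow]; gcongr

lemma norm_fromRows_le_norm_pencil_fromRows_matrixUnits :
    ‖fromRows A B‖ ≤ ‖pencil (fromRows A 0) (fromRows 0 B) matrixUnits‖ := by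
  refine l2_opNorm_le_of_forall (norm_nonneg _) fun w => ?_
  have hΛ : ‖toLp 2 (fromRows A B *ᵥ w)‖ =
      ‖toLp 2 (pencil (fromRows A 0) (fromRows 0 B) matrixUnits *ᵥ fun p => ![0, w p.1] p.2)‖ := by
    rw [pencil_fromRows_matrixUnits_mulVec]
    simp [EuclideanSpace.norm_eq, Fintype.sum_prod_type, Fintype.sum_sum_type]
  have hw : ‖toLp 2 w‖ = ‖toLp 2 fun p : n × Fin 2 => ![0, w p.1] p.2‖ := by
    simp [EuclideanSpace.norm_eq, Fintype.sum_prod_type]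
  rw [hΛ, hw]
  exact norm_toLp_mulVec_le _ _

end MatrixUnits

section Separation

variable {m n : Type*} [Fintype m] [Fintype n] [DecidableEq n]

theorem exists_norm_pencil_fromCols_lt_one_le_norm_pencil_fromRows [Nonempty n]
    {A B : Matrix m n ℂ} (hBA : ‖B‖ ≤ ‖A‖) (hB : Function.Injective B.mulVec) :
    ∃ X : Mat 2 × Mat 2, ‖pencil (fromCols A 0) (fromCols 0 B) X‖ < 1 ∧
      1 ≤ ‖pencil (fromRows A 0) (fromRows 0 B) X‖ :=
  exists_norm_pencil_lt_one_le_norm_pencil <| calc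
    ‖pencil (fromCols A 0) (fromCols 0 B) matrixUnits‖ ≤ max ‖A‖ ‖B‖ :=
      norm_pencil_fromCols_matrixUnits_le A B
    _ = ‖A‖ := max_eq_left hBA
    _ < ‖fromRows A B‖ := l2_opNorm_lt_l2_opNorm_fromRows A hB
    _ ≤ _ := norm_fromRows_le_norm_pencil_fromRows_matrixUnits A B

theorem exists_norm_pencil_fromRows_lt_one_le_norm_pencil_fromCols [DecidableEq m] [Nonempty m]
    {A B : Matrix m n ℂ} (hBA : ‖B‖ ≤ ‖A‖) (hB : Function.Injective Bᴴ.mulVec) :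
    ∃ X : Mat 2 × Mat 2, ‖pencil (fromRows A 0) (fromRows 0 B) X‖ < 1 ∧
      1 ≤ ‖pencil (fromCols A 0) (fromCols 0 B) X‖ := by
  obtain ⟨X, hlt, hle⟩ := exists_norm_pencil_fromCols_lt_one_le_norm_pencil_fromRows
    (A := Aᴴ) (by rwa [l2_opNorm_conjTranspose, l2_opNorm_conjTranspose]) hB
  have hrows : pencil (fromRows A 0) (fromRows 0 B) (X.1ᴴ, X.2ᴴ) =
      (pencil (fromCols Aᴴ 0) (fromCols 0 Bᴴ) X)ᴴ := by
    simp [conjTranspose_pencil, conjTranspose_fromCols_eq_fromRows_conjTranspose]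
  have hcols : pencil (fromCols A 0) (fromCols 0 B) (X.1ᴴ, X.2ᴴ) =
      (pencil (fromRows Aᴴ 0) (fromRows 0 Bᴴ) X)ᴴ := by
    simp [conjTranspose_pencil, conjTranspose_fromRows_eq_fromCols_conjTranspose]
  exact ⟨(X.1ᴴ, X.2ᴴ), by rwa [hrows, l2_opNorm_conjTranspose],
    by rwa [hcols, l2_opNorm_conjTranspose]⟩

end Separation

theorem ball_Er_ball_Ec_not_comparable_general {s : ℕ} (hs : 0 < s)
    (C1 C2 : Matrix (Fin s) (Fin s) ℂ) (hnorm1 : ‖C1‖ = 1) (hnorm2 : ‖C2‖ = 1)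
    (hinv2 : IsUnit C2) :
    (∃ X : Mat 2 × Mat 2,
      ‖Matrix.fromCols C1 0 ⊗ₖ X.1 + Matrix.fromCols 0 C2 ⊗ₖ X.2‖ < 1 ∧
        1 ≤ ‖Matrix.fromRows C1 0 ⊗ₖ X.1 + Matrix.fromRows 0 C2 ⊗ₖ X.2‖) ∧
      (∃ X' : Mat 2 × Mat 2,
        ‖Matrix.fromRows C1 0 ⊗ₖ X'.1 + Matrix.fromRows 0 C2 ⊗ₖ X'.2‖ < 1 ∧
          1 ≤ ‖Matrix.fromCols C1 0 ⊗ₖ X'.1 + Matrix.fromCols 0 C2 ⊗ₖ X'.2‖) := by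
  have : Nonempty (Fin s) := ⟨⟨0, hs⟩⟩
  have hle : ‖C2‖ ≤ ‖C1‖ := (hnorm2.trans hnorm1.symm).le
  exact ⟨exists_norm_pencil_fromCols_lt_one_le_norm_pencil_fromRows hle
      (mulVec_injective_iff_isUnit.2 hinv2),
    exists_norm_pencil_fromRows_lt_one_le_norm_pencil_fromCols hle
      (mulVec_injective_iff_isUnit.2 ((isUnit_conjTranspose C2).2 hinv2))⟩

/-- Proposition 2.6 (second part): at level two, neither of the spectraballs `𝓑_{E^r}` and
`𝓑_{E^c}` contains the other. -/
theorem ball_Er_ball_Ec_not_comparable {s : ℕ} (hs : 0 < s)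
    (C1 C2 : Matrix (Fin s) (Fin s) ℂ) (hnorm1 : ‖C1‖ = 1) (hnorm2 : ‖C2‖ = 1)
    (hinv1 : IsUnit C1) (hinv2 : IsUnit C2) :
    (∃ X : Mat 2 × Mat 2,
      ‖Matrix.fromCols C1 0 ⊗ₖ X.1 + Matrix.fromCols 0 C2 ⊗ₖ X.2‖ < 1 ∧
        1 ≤ ‖Matrix.fromRows C1 0 ⊗ₖ X.1 + Matrix.fromRows 0 C2 ⊗ₖ X.2‖) ∧
      (∃ X' : Mat 2 × Mat 2,
        ‖Matrix.fromRows C1 0 ⊗ₖ X'.1 + Matrix.fromRows 0 C2 ⊗ₖ X'.2‖ < 1 ∧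
          1 ≤ ‖Matrix.fromCols C1 0 ⊗ₖ X'.1 + Matrix.fromCols 0 C2 ⊗ₖ X'.2‖) :=
  ball_Er_ball_Ec_not_comparable_general hs C1 C2 hnorm1 hnorm2 hinv2
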